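/- Every honeycomb H=(V,E,w) has no fully infinite edge, and its set B(H) of semiinfinite edges is nonempty. -/
import Mathlib


open scoped BigOperators

attribute [local instance] Classical.propDecidable

noncomputable section

/-- Points of the plane. -/
abbrev Pt : Type := ℝ × ℝ

/-- Inner product on the plane. -/
def pdot (a b : Pt) : ℝ := a.1 * b.1 + a.2 * b.2

/-- The three generating vectors ξ₁ = (1,0), ξ₂ = (−1/2, √3/2), ξ₃ = (−1/2, −√3/2). -/
noncomputable def xiv : Fin 3 → Pt
  | 0 => ((1 : ℝ), (0 : ℝ))
  | 1 => (-(1 / 2 : ℝ), Real.sqrt 3 / 2)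
  | 2 => (-(1 / 2 : ℝ), -(Real.sqrt 3 / 2))

/-- Dual coordinates d_i(x) = −x·ξ_i. -/
noncomputable def dcoord (i : Fin 3) (x : Pt) : ℝ := -(pdot x (xiv i))

/-- Direction of the ray Ξ_i^s(·): ξ_i rotated by −90° for s = +(true), by +90° for
s = −(false), so that Ξ_i⁺(v)−v, ℝ₊ξ_i, Ξ_i⁻(v)−v follow anticlockwise. -/
noncomputable def rayDir (i : Fin 3) (s : Bool) : Pt :=
  if s then ((xiv i).2, -(xiv i).1) else (-(xiv i).2, (xiv i).1)

/-- The ray Ξ_i^s(v). -/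
def XiRay (i : Fin 3) (s : Bool) (v : Pt) : Set Pt :=
  {x | ∃ t : ℝ, 0 ≤ t ∧ x = v + t • rayDir i s}

/-- A finite line (nondegenerate segment). -/
def IsSegL (S : Set Pt) : Prop := ∃ a b : Pt, a ≠ b ∧ S = segment ℝ a b

/-- A semiinfinite line (ray) with end a. -/
def IsRayFrom (a : Pt) (S : Set Pt) : Prop :=
  ∃ d : Pt, d ≠ 0 ∧ S = {x | ∃ t : ℝ, 0 ≤ t ∧ x = a + t • d}

/-- A semiinfinite line (ray). -/
def IsRayL (S : Set Pt) : Prop := ∃ a : Pt, IsRayFrom a S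

/-- A fully infinite line. -/
def IsFullLineL (S : Set Pt) : Prop := ∃ a d : Pt, d ≠ 0 ∧ S = {x | ∃ t : ℝ, x = a + t • d}

/-- A line: a segment, a ray or a full line. -/
def IsLineL (S : Set Pt) : Prop := IsSegL S ∨ IsRayL S ∨ IsFullLineL S

/-- `S` is perpendicular to ξ_i, i.e. the dual coordinate d_i is constant on S. -/
def PerpTo (i : Fin 3) (S : Set Pt) : Prop := ∀ x ∈ S, ∀ y ∈ S, pdot (x - y) (xiv i) = 0

/-- w_i^s(v): the total weight of the lines of the system whose intersection with
Ξ_i^s(v) contains v and is a line (not a point). -/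
noncomputable def wis (L : Finset (Set Pt)) (w : Set Pt → ℤ) (i : Fin 3) (s : Bool)
    (v : Pt) : ℤ :=
  ∑ ℓ ∈ L.filter (fun ℓ => v ∈ ℓ ∧ IsLineL (ℓ ∩ XiRay i s v)), w ℓ

/-- A Ξ-system: a finite set of lines, each perpendicular to some ξ_i. -/
def IsXiSystem (L : Finset (Set Pt)) : Prop := ∀ ℓ ∈ L, IsLineL ℓ ∧ ∃ i : Fin 3, PerpTo i ℓ

/-- A pre-honeycomb: a Ξ-system with all w_i^s(v) nonnegative satisfying the
divergency (zero-tension) condition at every point. -/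
def IsPreHoneycomb (L : Finset (Set Pt)) (w : Set Pt → ℤ) : Prop :=
  IsXiSystem L ∧ (∀ (v : Pt) (i : Fin 3) (s : Bool), 0 ≤ wis L w i s v) ∧
  ∀ (v : Pt) (i j : Fin 3),
    wis L w i true v - wis L w i false v = wis L w j true v - wis L w j false v

/-- The divergency div_w(v). -/
noncomputable def divw (L : Finset (Set Pt)) (w : Set Pt → ℤ) (v : Pt) : ℤ :=
  wis L w 0 true v - wis L w 0 false v

/-- An interior (non-end) point of a line. -/
def InteriorPt (S : Set Pt) (x : Pt) : Prop :=
  x ∈ S ∧ ∃ d : Pt, d ≠ 0 ∧ ∃ ε : ℝ, 0 < ε ∧ ∀ t : ℝ, |t| ≤ ε → x + t • d ∈ S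

/-- `v` is an end of the line `S` (so `S` is incident to `v` as a graph edge). -/
def IsEnd (v : Pt) (S : Set Pt) : Prop := v ∈ S ∧ ¬ InteriorPt S v

/-- A honeycomb: a (non-standard) planar graph with a nonempty finite vertex set, whose
edges are positively weighted lines, each vertex incident with at least 3 edges, no
interior point of an edge lying on another edge, the ends of edges being vertices, and
the weighted edge set forming a pre-honeycomb. -/
structure Honeycomb : Type where
  verts : Finset Pt
  edges : Finset (Set Pt)
  w : Set Pt → ℤ
  verts_nonempty : verts.Nonempty
  degree : ∀ v ∈ verts, 3 ≤ (edges.filter fun e => IsEnd v e).card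
  no_cross : ∀ e ∈ edges, ∀ e' ∈ edges, e ≠ e' → ∀ x : Pt, InteriorPt e x → x ∉ e'
  w_pos : ∀ e ∈ edges, 0 < w e
  ends_mem : ∀ e ∈ edges, ∀ x : Pt, IsEnd x e → x ∈ verts
  edge_touch : ∀ e ∈ edges, ∃ v ∈ verts, v ∈ e
  pre : IsPreHoneycomb edges w

-- ====== aux lemmas ======

def RayP (v d : Pt) : Set Pt := {x | ∃ t : ℝ, 0 ≤ t ∧ x = v + t • d}

lemma seg_mem_iff {a b x : Pt} :
    x ∈ segment ℝ a b ↔ ∃ θ : ℝ, 0 ≤ θ ∧ θ ≤ 1 ∧ x = a + θ • (b - a) := by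
  rw [segment_eq_image']
  constructor
  · rintro ⟨θ, ⟨h0, h1⟩, rfl⟩; exact ⟨θ, h0, h1, rfl⟩
  · rintro ⟨θ, h0, h1, rfl⟩; exact ⟨θ, ⟨h0, h1⟩, rfl⟩

lemma two_pts {S : Set Pt} (h : IsLineL S) : ∃ p q : Pt, p ≠ q ∧ p ∈ S ∧ q ∈ S := by
  rcases h with ⟨a, b, hab, rfl⟩ | ⟨a, d, hd, rfl⟩ | ⟨a, d, hd, rfl⟩
  · exact ⟨a, b, hab, left_mem_segment ℝ a b, right_mem_segment ℝ a b⟩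
  · refine ⟨a, a + d, ?_, ⟨0, le_refl _, by simp⟩, ⟨1, zero_le_one, by simp⟩⟩
    intro h; exact hd (by simpa using h.symm)
  · refine ⟨a, a + d, ?_, ⟨0, by simp⟩, ⟨1, by simp⟩⟩
    intro h; exact hd (by simpa using h.symm)

lemma full_interior {S : Set Pt} (h : IsFullLineL S) {x : Pt} (hx : x ∈ S) :
    InteriorPt S x := by
  obtain ⟨a, d, hd, rfl⟩ := h
  obtain ⟨t0, rfl⟩ := hx
  exact ⟨⟨t0, rfl⟩, d, hd, 1, one_pos, fun t _ => ⟨t0 + t, by module⟩⟩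

lemma smul_cancel {v d : Pt} (hd : d ≠ 0) {s t : ℝ} (h : v + s • d = v + t • d) : s = t := by
  have h2 : (s - t) • d = 0 := by
    have h3 := add_left_cancel h
    rw [sub_smul, h3, sub_self]
  rcases smul_eq_zero.mp h2 with h3 | h3
  · exact sub_eq_zero.mp h3
  · exact absurd h3 hd

lemma ne_add_smul {v d : Pt} (hd : d ≠ 0) {β : ℝ} (hβ : β ≠ 0) : v ≠ v + β • d := by
  intro h
  have h2 : β • d = 0 := by
    have := h.symm
    rwa [add_eq_left] at this
  rcases smul_eq_zero.mp h2 with h3 | h3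
  · exact hβ h3
  · exact hd h3

lemma endpoint_not_interior {a b : Pt} (hab : a ≠ b) : ¬ InteriorPt (segment ℝ a b) a := by
  rintro ⟨-, d, hd, ε, hε, hmem⟩
  obtain ⟨θ1, h10, h11, he1⟩ := seg_mem_iff.mp (hmem ε (by rw [abs_of_pos hε]))
  obtain ⟨θ2, h20, h21, he2⟩ := seg_mem_iff.mp (hmem (-ε) (by rw [abs_neg, abs_of_pos hε]))
  have e1 : ε • d = θ1 • (b - a) := add_left_cancel he1
  have e2 : (-ε) • d = θ2 • (b - a) := add_left_cancel he2
  have e3 : (θ1 + θ2) • (b - a) = 0 := by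
    rw [add_smul, ← e1, ← e2, ← add_smul]
    simp
  rcases smul_eq_zero.mp e3 with h3 | h3
  · have hθ1 : θ1 = 0 := by linarith
    have : ε • d = 0 := by rw [e1, hθ1, zero_smul]
    rcases smul_eq_zero.mp this with h4 | h4
    · linarith
    · exact hd h4
  · exact hab (by rw [← sub_eq_zero]; rw [← neg_sub b a, h3, neg_zero])

lemma endpoint_not_interior' {a b : Pt} (hab : a ≠ b) : ¬ InteriorPt (segment ℝ a b) b := by
  rw [segment_symm]; exact endpoint_not_interior hab.symm

lemma strict_interior {a b : Pt} (hab : a ≠ b) {θ : ℝ} (h0 : 0 < θ) (h1 : θ < 1) :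
    InteriorPt (segment ℝ a b) (a + θ • (b - a)) := by
  refine ⟨seg_mem_iff.mpr ⟨θ, h0.le, h1.le, rfl⟩, b - a, sub_ne_zero.mpr hab.symm,
    min θ (1 - θ), lt_min h0 (by linarith), fun t ht => ?_⟩
  have h2 := abs_le.mp ht
  have h3 := min_le_left θ (1 - θ)
  have h4 := min_le_right θ (1 - θ)
  exact seg_mem_iff.mpr ⟨θ + t, by linarith, by linarith, by module⟩

lemma end_eq_endpoint {a b v : Pt} (hab : a ≠ b) (hmem : v ∈ segment ℝ a b)
    (hni : ¬ InteriorPt (segment ℝ a b) v) : v = a ∨ v = b := by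
  obtain ⟨θ, h0, h1, rfl⟩ := seg_mem_iff.mp hmem
  rcases eq_or_lt_of_le h0 with h | h
  · left; rw [← h]; module
  rcases eq_or_lt_of_le h1 with h' | h'
  · right; rw [h']; module
  · exact absurd (strict_interior hab h h') hni

lemma seg_x_le {a b x : Pt} (M : ℝ) (ha : a.1 ≤ M) (hb : b.1 ≤ M)
    (hx : x ∈ segment ℝ a b) : x.1 ≤ M := by
  obtain ⟨θ, h0, h1, rfl⟩ := seg_mem_iff.mp hx
  have h2 : (a + θ • (b - a)).1 = a.1 + θ * (b.1 - a.1) := rfl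
  rw [h2]; nlinarith

lemma sqrt3_sq : Real.sqrt 3 ^ 2 = 3 := Real.sq_sqrt (by norm_num)

lemma xiv_norm (i : Fin 3) : (xiv i).1 ^ 2 + (xiv i).2 ^ 2 = 1 := by
  fin_cases i <;> simp [xiv] <;> nlinarith [sqrt3_sq]

lemma perp_param (i : Fin 3) {x : Pt} (h : pdot x (xiv i) = 0) :
    ∃ t : ℝ, x = t • rayDir i true := by
  have hN := xiv_norm i
  unfold pdot at h
  refine ⟨x.1 * (xiv i).2 - x.2 * (xiv i).1, ?_⟩
  have hray : rayDir i true = ((xiv i).2, -(xiv i).1) := rfl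
  rw [hray]
  apply Prod.ext
  · simp only [Prod.smul_fst, smul_eq_mul]
    linear_combination (xiv i).1 * h - x.1 * hN
  · simp only [Prod.smul_snd, smul_eq_mul]
    linear_combination (xiv i).2 * h - x.2 * hN

lemma rayDir_false (i : Fin 3) : rayDir i false = - rayDir i true := by
  unfold rayDir
  simp only [if_true, if_false, Bool.false_eq_true]
  exact Prod.ext rfl (neg_neg _).symm

lemma rayDir_true_ne (i : Fin 3) : rayDir i true ≠ 0 := by
  intro h
  have hray : rayDir i true = ((xiv i).2, -(xiv i).1) := rfl
  have h2 : (xiv i).2 = 0 ∧ -(xiv i).1 = 0 := by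
    rw [hray] at h
    exact ⟨congrArg Prod.fst h, congrArg Prod.snd h⟩
  have hN := xiv_norm i
  nlinarith [h2.1, h2.2]

lemma interA {v d : Pt} (hd : d ≠ 0) {α β : ℝ} (hα : α ≤ 0) (hβ : 0 ≤ β) (hαβ : α < β) :
    segment ℝ (v + α • d) (v + β • d) ∩ RayP v d = segment ℝ v (v + β • d) := by
  ext x
  constructor
  · rintro ⟨hseg, t, ht, rfl⟩
    obtain ⟨θ, h0, h1, heq⟩ := seg_mem_iff.mp hseg
    have heq' : v + t • d = v + (α + θ * (β - α)) • d := by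
      rw [heq]; module
    have hco : t = α + θ * (β - α) := smul_cancel hd heq'
    rcases eq_or_lt_of_le hβ with hβ0 | hβ0
    · have ht0 : t = 0 := le_antisymm (by nlinarith) ht
      exact seg_mem_iff.mpr ⟨0, le_refl _, zero_le_one, by rw [ht0]; module⟩
    · refine seg_mem_iff.mpr ⟨t / β, div_nonneg ht hβ0.le, (div_le_one hβ0).mpr (by nlinarith), ?_⟩
      rw [show (v + β • d) - v = β • d by abel, smul_smul, div_mul_cancel₀ _ (ne_of_gt hβ0)]
  · intro hx
    obtain ⟨σ, h0, h1, rfl⟩ := seg_mem_iff.mp hx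
    have hsimp : v + σ • ((v + β • d) - v) = v + (σ * β) • d := by module
    rw [hsimp]
    refine ⟨?_, σ * β, mul_nonneg h0 hβ, rfl⟩
    refine seg_mem_iff.mpr ⟨(σ * β - α) / (β - α), div_nonneg (by nlinarith) (by linarith), ?_, ?_⟩
    · rw [div_le_one (by linarith)]; nlinarith
    · rw [show (v + β • d) - (v + α • d) = (β - α) • d by module, smul_smul,
        div_mul_cancel₀ _ (ne_of_gt (by linarith : (0:ℝ) < β - α))]
      module

lemma segment_ray_aux {v d : Pt} (hd : d ≠ 0) {α β : ℝ} (hαβ : α < β)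
    (hv : v ∈ segment ℝ (v + α • d) (v + β • d)) :
    IsSegL (segment ℝ (v + α • d) (v + β • d) ∩ RayP v d) ∨
    IsSegL (segment ℝ (v + α • d) (v + β • d) ∩ RayP v (-d)) := by
  obtain ⟨θ, h0, h1, heq⟩ := seg_mem_iff.mp hv
  have heq' : v + (0:ℝ) • d = v + (α + θ * (β - α)) • d := by
    calc v + (0:ℝ) • d = v := by module
    _ = v + α • d + θ • ((v + β • d) - (v + α • d)) := heq
    _ = v + (α + θ * (β - α)) • d := by module
  have h00 : (0:ℝ) = α + θ * (β - α) := smul_cancel hd heq'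
  have hα0 : α ≤ 0 := by nlinarith
  have hβ0 : 0 ≤ β := by nlinarith
  rcases eq_or_lt_of_le hβ0 with hb0 | hb0
  · right
    have hd' : -d ≠ 0 := neg_ne_zero.mpr hd
    have e1 : v + α • d = v + (-α) • (-d) := by module
    have e2 : v + β • d = v + (-β) • (-d) := by module
    rw [e1, e2, segment_symm ℝ,
      interA hd' (by linarith : -β ≤ 0) (by linarith : (0:ℝ) ≤ -α) (by linarith : -β < -α)]
    exact ⟨v, v + (-α) • (-d), ne_add_smul hd' (by intro h; apply absurd h; simp; linarith), rfl⟩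
  · left
    rw [interA hd hα0 hβ0 hαβ]
    exact ⟨v, v + β • d, ne_add_smul hd (ne_of_gt hb0), rfl⟩

lemma segment_ray {v a b d : Pt} (hd : d ≠ 0) (hab : a ≠ b)
    (hv : v ∈ segment ℝ a b) {α β : ℝ} (ha : a = v + α • d) (hb : b = v + β • d) :
    IsSegL (segment ℝ a b ∩ RayP v d) ∨ IsSegL (segment ℝ a b ∩ RayP v (-d)) := by
  subst ha; subst hb
  rcases lt_trichotomy α β with h | h | h
  · exact segment_ray_aux hd h hv
  · exact absurd (by rw [h]) hab
  · rw [segment_symm ℝ]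
    rw [segment_symm ℝ] at hv
    exact segment_ray_aux hd h hv

lemma snd_aux (v d : Pt) (θ γ : ℝ) :
    (v + θ • ((v + γ • d) - v)).2 = v.2 + θ * (γ * d.2) := by
  simp [Prod.snd_add, Prod.snd_sub, Prod.smul_snd, smul_eq_mul]
  try ring



lemma XiRay_eq_RayP (i : Fin 3) (s : Bool) (v : Pt) : XiRay i s v = RayP v (rayDir i s) := rfl

lemma overlap_false (H : Honeycomb) {l l' : Set Pt} (hl : l ∈ H.edges) (hl' : l' ∈ H.edges)
    (hne : l ≠ l') {v d : Pt} (hd : d ≠ 0) {b b' : ℝ}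
    (hprod : 0 < b * b') (habs : |b| ≤ |b'|)
    (h1 : l = segment ℝ v (v + b • d)) (h2 : l' = segment ℝ v (v + b' • d)) : False := by
  have hb : b ≠ 0 := by rintro rfl; simp at hprod
  have hb' : b' ≠ 0 := by rintro rfl; simp at hprod
  have habspos : 0 < |b'| := abs_pos.mpr hb'
  have hθpos : 0 < b / (2 * b') := by
    rcases mul_pos_iff.mp hprod with ⟨ha2, hb2⟩ | ⟨ha2, hb2⟩
    · exact div_pos ha2 (by linarith)
    · exact div_pos_of_neg_of_neg ha2 (by linarith)
  have hθ1 : b / (2 * b') ≤ 1 := by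
    calc b / (2 * b') ≤ |b / (2 * b')| := le_abs_self _
      _ = |b| / (2 * |b'|) := by rw [abs_div, abs_mul, abs_two]
      _ ≤ |b'| / (2 * |b'|) := by gcongr
      _ ≤ 1 := by rw [div_le_one (by positivity)]; linarith
  have hmem : v + (b / 2) • d ∈ l' := by
    rw [h2]
    refine seg_mem_iff.mpr ⟨b / (2 * b'), hθpos.le, hθ1, ?_⟩
    rw [show (v + b' • d) - v = b' • d by abel, smul_smul,
      show b / (2 * b') * b' = b / 2 by field_simp]
  have hint : InteriorPt l (v + (b / 2) • d) := by
    rw [h1]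
    have h3 := strict_interior (a := v) (b := v + b • d) (ne_add_smul hd hb)
      (θ := 1/2) (by norm_num) (by norm_num)
    rwa [show v + (1/2 : ℝ) • ((v + b • d) - v) = v + (b / 2) • d by module] at h3
  exact H.no_cross l hl l' hl' hne _ hint hmem

/-- A honeycomb has no fully infinite edge, and its boundary (the set
of semiinfinite edges) is nonempty. -/
theorem stmt9 (H : Honeycomb) :
    (∀ e ∈ H.edges, ¬ IsFullLineL e) ∧ ∃ e ∈ H.edges, IsRayL e := by
  have part1 : ∀ e ∈ H.edges, ¬ IsFullLineL e := by
    intro e he hfull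
    obtain ⟨v, hv, hve⟩ := H.edge_touch e he
    have hdeg := H.degree v hv
    have hne : ((H.edges.filter fun e' => IsEnd v e')).Nonempty :=
      Finset.card_pos.mp (by omega)
    obtain ⟨e', he'⟩ := hne
    rw [Finset.mem_filter] at he'
    have hint : InteriorPt e v := full_interior hfull hve
    have hnee : e ≠ e' := by rintro rfl; exact he'.2.2 hint
    exact H.no_cross e he e' he'.1 hnee v hint he'.2.1
  refine ⟨part1, ?_⟩
  by_contra hNoRay
  push_neg at hNoRay
  have hseg : ∀ e ∈ H.edges, IsSegL e := by
    intro e he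
    rcases (H.pre.1 e he).1 with h | h | h
    · exact h
    · exact absurd h (hNoRay e he)
    · exact absurd h (part1 e he)
  obtain ⟨v, hv, hmax⟩ := H.verts.exists_max_image (fun u => u.1) H.verts_nonempty
  have hbound : ∀ e ∈ H.edges, ∀ x ∈ e, x.1 ≤ v.1 := by
    intro e he x hx
    obtain ⟨a, b, hab, rfl⟩ := hseg e he
    have hav : a ∈ H.verts := H.ends_mem _ he a
      ⟨left_mem_segment ℝ a b, endpoint_not_interior hab⟩
    have hbv : b ∈ H.verts := H.ends_mem _ he b
      ⟨right_mem_segment ℝ a b, endpoint_not_interior' hab⟩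
    exact seg_x_le v.1 (hmax a hav) (hmax b hbv) hx
  have hwpos : ∀ (i : Fin 3) (s : Bool) (l : Set Pt), l ∈ H.edges → v ∈ l →
      IsLineL (l ∩ XiRay i s v) → 0 < wis H.edges H.w i s v := by
    intro i s l hl hvl hline
    unfold wis
    apply Finset.sum_pos
    · intro e he; exact H.w_pos e (Finset.mem_filter.mp he).1
    · exact ⟨l, Finset.mem_filter.mpr ⟨hl, hvl, hline⟩⟩
  have hzero : ∀ (i : Fin 3) (s : Bool), 0 < (rayDir i s).1 → wis H.edges H.w i s v = 0 := by
    intro i s hdir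
    unfold wis
    rw [Finset.filter_false_of_mem, Finset.sum_empty]
    rintro l hl ⟨hvl, hline⟩
    obtain ⟨p, q, hpq, hp, hq⟩ := two_pts hline
    have hex : ∃ r, r ∈ l ∩ XiRay i s v ∧ r ≠ v := by
      rcases eq_or_ne p v with rfl | h
      · exact ⟨q, hq, fun h2 => hpq h2.symm⟩
      · exact ⟨p, hp, h⟩
    obtain ⟨r, ⟨hrl, t, ht, rfl⟩, hrv⟩ := hex
    have htne : t ≠ 0 := by
      intro h; apply hrv; rw [h]; module
    have ht0 : 0 < t := lt_of_le_of_ne ht (Ne.symm htne)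
    have hco : (v + t • rayDir i s).1 = v.1 + t * (rayDir i s).1 := rfl
    have hle := hbound l hl _ hrl
    rw [hco] at hle
    nlinarith
  have hsqrt3 : 0 < Real.sqrt 3 := Real.sqrt_pos.mpr (by norm_num)
  have h1t : wis H.edges H.w 1 true v = 0 := by
    apply hzero
    show 0 < (if true then ((xiv 1).2, -(xiv 1).1) else _).1
    simp [xiv]
  have h2f : wis H.edges H.w 2 false v = 0 := by
    apply hzero
    show 0 < (if false then _ else (-(xiv 2).2, (xiv 2).1)).1
    simp [xiv]
  have hdiv := H.pre.2.2 v 1 2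
  have hn1f := H.pre.2.1 v 1 false
  have hn2t := H.pre.2.1 v 2 true
  have h1f : wis H.edges H.w 1 false v = 0 := by omega
  have h2t : wis H.edges H.w 2 true v = 0 := by omega
  have hcard : 3 ≤ (H.edges.filter fun e => IsEnd v e).card := H.degree v hv
  have hd0 : rayDir 0 true ≠ 0 := rayDir_true_ne 0
  have hd02 : (rayDir 0 true).2 = -1 := by
    show (((xiv 0).2 : ℝ), -(xiv 0).1).2 = -1
    simp [xiv]
  have hvert : ∀ l ∈ H.edges.filter (fun e => IsEnd v e),
      ∃ β : ℝ, β ≠ 0 ∧ l = segment ℝ v (v + β • rayDir 0 true) := by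
    intro l hlF
    obtain ⟨hle, hvl, hnint⟩ : l ∈ H.edges ∧ v ∈ l ∧ ¬ InteriorPt l v := by
      have h := Finset.mem_filter.mp hlF; exact ⟨h.1, h.2.1, h.2.2⟩
    obtain ⟨a, b, hab, rfl⟩ := hseg l hle
    obtain ⟨i, hperp⟩ := (H.pre.1 _ hle).2
    have hparam : ∀ x ∈ segment ℝ a b, ∃ t : ℝ, x = v + t • rayDir i true := by
      intro x hx
      obtain ⟨t, ht⟩ := perp_param i (hperp x hx v hvl)
      exact ⟨t, by rw [← ht]; abel⟩
    have hcontra : (i = 1 ∨ i = 2) → False := by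
      intro hi
      obtain ⟨α, ha⟩ := hparam a (left_mem_segment ℝ a b)
      obtain ⟨β, hb⟩ := hparam b (right_mem_segment ℝ a b)
      rcases segment_ray (rayDir_true_ne i) hab hvl ha hb with hS | hS
      · have hP : 0 < wis H.edges H.w i true v := by
          apply hwpos i true _ hle hvl
          rw [XiRay_eq_RayP]
          exact Or.inl hS
        rcases hi with rfl | rfl <;> omega
      · have hP : 0 < wis H.edges H.w i false v := by
          apply hwpos i false _ hle hvl
          rw [XiRay_eq_RayP, rayDir_false]
          exact Or.inl hS
        rcases hi with rfl | rfl <;> omega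
    have hi0 : i = 0 := by
      fin_cases i
      · rfl
      · exact (hcontra (Or.inl rfl)).elim
      · exact (hcontra (Or.inr rfl)).elim
    subst hi0
    rcases end_eq_endpoint hab hvl hnint with rfl | rfl
    · obtain ⟨β, hbeq⟩ := hparam b (right_mem_segment ℝ v b)
      refine ⟨β, ?_, by rw [hbeq]⟩
      intro h
      apply hab
      rw [hbeq, h]; module
    · obtain ⟨β, haeq⟩ := hparam a (left_mem_segment ℝ a v)
      refine ⟨β, ?_, by rw [segment_symm ℝ, haeq]⟩
      intro h
      apply hab
      rw [haeq, h]; module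
  have hpig := Finset.exists_ne_map_eq_of_card_lt_of_maps_to
      (s := H.edges.filter fun e => IsEnd v e) (t := (Finset.univ : Finset Bool))
      (by simp only [Finset.card_univ, Fintype.card_bool]; omega)
      (f := fun S => if (∃ p ∈ S, v.2 < p.2) then true else false)
      (fun a _ => Finset.mem_univ _)
  obtain ⟨l, hlF, l', hl'F, hnell, hff⟩ := hpig
  obtain ⟨β, hβ0, hrepr⟩ := hvert l hlF
  obtain ⟨β', hβ'0, hrepr'⟩ := hvert l' hl'F
  have hup : ∀ (γ : ℝ) (S : Set Pt), γ ≠ 0 → S = segment ℝ v (v + γ • rayDir 0 true) →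
      ((∃ x ∈ S, v.2 < x.2) ↔ γ < 0) := by
    intro γ S hγ hSr
    subst hSr
    constructor
    · rintro ⟨x, hx, hx2⟩
      obtain ⟨θ, h0, h1, rfl⟩ := seg_mem_iff.mp hx
      rw [snd_aux, hd02] at hx2
      by_contra hc
      push_neg at hc
      nlinarith [mul_nonneg h0 hc]
    · intro hγneg
      refine ⟨v + γ • rayDir 0 true, right_mem_segment ℝ _ _, ?_⟩
      have hco : (v + γ • rayDir 0 true).2 = v.2 + γ * (rayDir 0 true).2 := rfl
      rw [hco, hd02]
      linarith
  have hiff := hup β l hβ0 hrepr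
  have hiff' := hup β' l' hβ'0 hrepr'
  have hprod : 0 < β * β' := by
    by_cases hp : ∃ p ∈ l, v.2 < p.2
    · have hq : ∃ p ∈ l', v.2 < p.2 := by
        by_contra hq
        rw [if_pos hp, if_neg hq] at hff
        exact Bool.noConfusion hff
      have hb1 := hiff.mp hp
      have hb2 := hiff'.mp hq
      exact mul_pos_of_neg_of_neg hb1 hb2
    · have hq : ¬ ∃ p ∈ l', v.2 < p.2 := by
        intro hq
        rw [if_neg hp, if_pos hq] at hff
        exact Bool.noConfusion hff
      have hb1 : 0 < β := lt_of_le_of_ne (not_lt.mp (fun h => hp (hiff.mpr h))) (Ne.symm hβ0)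
      have hb2 : 0 < β' := lt_of_le_of_ne (not_lt.mp (fun h => hq (hiff'.mpr h))) (Ne.symm hβ'0)
      exact mul_pos hb1 hb2
  have hle := (Finset.mem_filter.mp hlF).1
  have hl'e := (Finset.mem_filter.mp hl'F).1
  rcases le_total |β| |β'| with habs | habs
  · exact overlap_false H hle hl'e hnell hd0 hprod habs hrepr hrepr'
  · exact overlap_false H hl'e hle hnell.symm hd0 (mul_comm β β' ▸ hprod) habs hrepr' hrepr
end
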